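/- If a formula A of L is a DI9 logical consequence of a set Γ of formulas of L, then A is a tautological consequence of Γ in the sense of classical semantics. -/
import Mathlib


/-- Formulas of the propositional language L: countably many atoms,
negation, and disjunction. -/
inductive Form : Type
  | atom : ℕ → Form
  | neg : Form → Form
  | disj : Form → Form → Form

/-- The three values: the truth values `T`, `F`, and the value `O`
(absence of truth value). -/
inductive Val3 : Type
  | T : Val3
  | F : Val3
  | O : Val3
  deriving DecidableEq

/-- A DI9 valuation for L: a function from (atomic formula, real number)
to {T, F, O} satisfying persistence of truth values and weak bivalence. -/
structure DI9Val where
  val : ℕ → ℝ → Val3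
  mono_T : ∀ (n : ℕ) (j h : ℝ), j < h → val n j = Val3.T → val n h = Val3.T
  mono_F : ∀ (n : ℕ) (j h : ℝ), j < h → val n j = Val3.F → val n h = Val3.F
  eventually_tv : ∀ n : ℕ, ∃ j : ℝ, val n j = Val3.T ∨ val n j = Val3.F

-- The DI9 classical interpretation α* associated to a DI9 valuation α.
open Classical in
noncomputable def cstar (α : DI9Val) : Form → Val3
  | .atom n => if ∃ j : ℝ, α.val n j = Val3.T then Val3.T else Val3.F
  | .neg B => if cstar α B = Val3.F then Val3.T else Val3.F
  | .disj B C => if cstar α B = Val3.T ∨ cstar α C = Val3.T then Val3.T else Val3.F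

/-- β is a j-extension of α: they agree on all atomic formulas at all times ≤ j. -/
def IsJExt (β α : DI9Val) (j : ℝ) : Prop :=
  ∀ (n : ℕ) (h : ℝ), h ≤ j → β.val n h = α.val n h

-- The DI9 interpretation Iα associated to a DI9 valuation α.
open Classical in
noncomputable def interp (α : DI9Val) : Form → ℝ → Val3
  | .atom n, j => α.val n j
  | .neg B, j =>
      match interp α B j with
      | Val3.T => Val3.F
      | Val3.F => Val3.T
      | Val3.O => Val3.O
  | .disj B C, j =>
      if ∀ β : DI9Val, IsJExt β α j → (cstar β B = Val3.T ∨ cstar β C = Val3.T) then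
        Val3.T
      else if ∀ β : DI9Val, IsJExt β α j → (cstar β B = Val3.F ∧ cstar β C = Val3.F) then
        Val3.F
      else Val3.O

/-- A classical interpretation for L. -/
structure ClassInterp where
  val : Form → Val3
  tv : ∀ A : Form, val A = Val3.T ∨ val A = Val3.F
  neg_iff : ∀ B : Form, val (.neg B) = Val3.T ↔ val B = Val3.F
  disj_iff : ∀ B C : Form, val (.disj B C) = Val3.T ↔
    (val B = Val3.T ∨ val C = Val3.T)

/-- A is a tautological consequence of Γ in the sense of classical semantics. -/
def TautConseq (Γ : Set Form) (A : Form) : Prop :=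
  ∀ Ic : ClassInterp, (∀ B ∈ Γ, Ic.val B = Val3.T) → Ic.val A = Val3.T

/-- A is a DI9 logical consequence of Γ. -/
def DI9Conseq (Γ : Set Form) (A : Form) : Prop :=
  ∀ (j : ℝ) (α : DI9Val), (∀ B ∈ Γ, interp α B j = Val3.T) → interp α A j = Val3.T


/-- The constant DI9 valuation associated to a classical interpretation. -/
noncomputable def constVal (Ic : ClassInterp) : DI9Val where
  val n _ := Ic.val (.atom n)
  mono_T _ _ _ _ h := h
  mono_F _ _ _ _ h := h
  eventually_tv n := ⟨0, Ic.tv (.atom n)⟩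

lemma tv_F_iff (Ic : ClassInterp) (A : Form) :
    Ic.val A = Val3.F ↔ Ic.val A ≠ Val3.T := by
  rcases Ic.tv A with h | h <;> simp [h]

lemma ci_neg_F (Ic : ClassInterp) (B : Form) :
    Ic.val (.neg B) = Val3.F ↔ Ic.val B = Val3.T := by
  rw [tv_F_iff]; simp only [ne_eq, Ic.neg_iff]
  rcases Ic.tv B with h | h <;> simp [h]

lemma ci_disj_F (Ic : ClassInterp) (B C : Form) :
    Ic.val (.disj B C) = Val3.F ↔ (Ic.val B = Val3.F ∧ Ic.val C = Val3.F) := by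
  rw [tv_F_iff]; simp only [ne_eq, Ic.disj_iff]
  push_neg
  rw [tv_F_iff Ic B, tv_F_iff Ic C]

lemma cstar_ext (Ic : ClassInterp) (j : ℝ) (β : DI9Val)
    (hβ : IsJExt β (constVal Ic) j) : ∀ B, cstar β B = Ic.val B := by
  intro B
  induction B with
  | atom n =>
      rcases Ic.tv (.atom n) with h | h
      · have : β.val n j = Val3.T := by rw [hβ n j le_rfl]; exact h
        simp [cstar, h]; exact ⟨j, this⟩
      · have hall : ∀ k : ℝ, β.val n k ≠ Val3.T := by
          intro k hk
          have hj : β.val n j = Val3.F := by rw [hβ n j le_rfl]; exact h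
          rcases le_or_gt k j with hkj | hjk
          · have heq := hβ n k hkj
            have hF : (constVal Ic).val n k = Val3.F := h
            rw [heq, hF] at hk; exact Val3.noConfusion hk
          · have := β.mono_F n j k hjk hj
            rw [this] at hk; exact Val3.noConfusion hk
        simp [cstar, h]
        intro k hk; exact hall k hk
  | neg B ih =>
      rcases Ic.tv (.neg B) with h | h
      · have hB : Ic.val B = Val3.F := (Ic.neg_iff B).mp h
        simp [cstar, ih, hB, h]
      · have hB : Ic.val B = Val3.T := (ci_neg_F Ic B).mp h
        simp [cstar, ih, hB, h]
  | disj B C ihB ihC =>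
      rcases Ic.tv (.disj B C) with h | h
      · have := (Ic.disj_iff B C).mp h
        simp [cstar, ihB, ihC, this, h]
      · have := (ci_disj_F Ic B C).mp h
        simp [cstar, ihB, ihC, this.1, this.2, h]

lemma self_jext (α : DI9Val) (j : ℝ) : IsJExt α α j := fun _ _ _ => rfl

lemma interp_const (Ic : ClassInterp) (j : ℝ) :
    ∀ B, interp (constVal Ic) B j = Ic.val B := by
  intro B
  induction B with
  | atom n => rfl
  | neg B ih =>
      rcases Ic.tv B with h | h
      · have : Ic.val (.neg B) = Val3.F := (ci_neg_F Ic B).mpr h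
        rw [this]; simp [interp, ih, h]
      · have : Ic.val (.neg B) = Val3.T := (Ic.neg_iff B).mpr h
        rw [this]; simp [interp, ih, h]
  | disj B C ihB ihC =>
      rcases Ic.tv (.disj B C) with h | h
      · have hcond : ∀ β : DI9Val, IsJExt β (constVal Ic) j →
            (cstar β B = Val3.T ∨ cstar β C = Val3.T) := by
          intro β hβ
          rw [cstar_ext Ic j β hβ B, cstar_ext Ic j β hβ C]
          exact (Ic.disj_iff B C).mp h
        rw [h]; simp only [interp]; rw [if_pos hcond]
      · have hBC := (ci_disj_F Ic B C).mp h
        have hcond2 : ∀ β : DI9Val, IsJExt β (constVal Ic) j →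
            (cstar β B = Val3.F ∧ cstar β C = Val3.F) := by
          intro β hβ
          rw [cstar_ext Ic j β hβ B, cstar_ext Ic j β hβ C]
          exact hBC
        have hnot : ¬ ∀ β : DI9Val, IsJExt β (constVal Ic) j →
            (cstar β B = Val3.T ∨ cstar β C = Val3.T) := by
          intro hall
          rcases hall (constVal Ic) (self_jext _ j) with hT | hT <;>
            rcases hcond2 (constVal Ic) (self_jext _ j) with ⟨h1, h2⟩ <;>
            simp_all
        rw [h]; simp only [interp]; rw [if_neg hnot, if_pos hcond2]

theorem stmt_9 (Γ : Set Form) (A : Form) (h : DI9Conseq Γ A) : TautConseq Γ A := by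
  intro Ic hΓ
  have := h 0 (constVal Ic) (fun B hB => by rw [interp_const Ic 0 B]; exact hΓ B hB)
  rw [interp_const Ic 0 A] at this
  exact this
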